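/- arXiv:1708.04065 — 2 statements merged into one kernel-verified Lean document; each statement's English description precedes it below -/
import Mathlib

section
/- Let Ā = (ℤ/2)⟨X,Y⟩. Then for every c ∈ Ā, the element X²Y² − c² does not lie in the additive subgroup [Ā,Ā] + F⁵Ā. -/
/-!
Let `φ : Ā → ℤ/2` be the linear map sending a word to `1` if it is a cyclic rotation of `XXYY` and to `0` otherwise.
Since `uv` and `vu` are rotations of each other, `φ` kills commutators; it kills `F⁵Ā` because
rotations of `XXYY` have length `4`. It also kills every square: in characteristic `2`,
`φ(c²) = Σ_{u,v} c_u c_v φ(uv)` reduces to the diagonal terms `φ(uu)`, and no rotation of `XXYY`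
is a square word. But `φ(X²Y²) = 1`.
-/

/-- Words in the two letters `X, Y`. -/
abbrev FW := FreeMonoid (Fin 2)

/-- `Ā = (ℤ/2)⟨X,Y⟩`, the free associative unital algebra over `ℤ/2` on two
non-commuting variables, realized as a monoid algebra of the free monoid. -/
abbrev Abar := MonoidAlgebra (ZMod 2) FW

/-- The variable `X`. -/
noncomputable def Xv : Abar := MonoidAlgebra.of (ZMod 2) FW (FreeMonoid.of 0)

/-- The variable `Y`. -/
noncomputable def Yv : Abar := MonoidAlgebra.of (ZMod 2) FW (FreeMonoid.of 1)

/-- The set of commutators of `Ā`, generating `[Ā,Ā]`. -/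
def commA : Set Abar := {x | ∃ a b : Abar, x = a * b - b * a}

/-- The words of length `≥ n`; they generate `FⁿĀ = ⊕_{i≥n} Ā_i` as an additive group. -/
def FdegSet (n : ℕ) : Set Abar :=
  {x | ∃ w : FW, n ≤ w.length ∧ x = MonoidAlgebra.of (ZMod 2) FW w}

section CyclicFunctional

variable {R M : Type*} [CommRing R]

/-- The additive functional `Σ_m a_m m ↦ Σ_m a_m χ(m)` on `R[M]`. -/
noncomputable def coeffPairing (χ : M → R) : MonoidAlgebra R M →+ R :=
  (Finsupp.liftAddHom fun m => AddMonoidHom.mulRight (χ m)).comp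
    MonoidAlgebra.coeffAddEquiv.toAddMonoidHom

theorem coeffPairing_single (χ : M → R) (m : M) (r : R) :
    coeffPairing χ (MonoidAlgebra.single m r) = r * χ m :=
  Finsupp.liftAddHom_apply_single _ m r

variable [Monoid M] {χ : M → R} (hχ : ∀ u v, χ (u * v) = χ (v * u))
include hχ

theorem coeffPairing_mul_comm (a b : MonoidAlgebra R M) :
    coeffPairing χ (a * b) = coeffPairing χ (b * a) := by
  induction a using MonoidAlgebra.induction_linear with
  | zero => simp
  | add a a' ha ha' => simp only [add_mul, mul_add, map_add, ha, ha']
  | single u r =>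
    induction b using MonoidAlgebra.induction_linear with
    | zero => simp
    | add b b' hb hb' => simp only [add_mul, mul_add, map_add, hb, hb']
    | single v s =>
      simp only [MonoidAlgebra.single_mul_single, coeffPairing_single, hχ u v, mul_comm r s]

theorem coeffPairing_commutator (a b : MonoidAlgebra R M) :
    coeffPairing χ (a * b - b * a) = 0 := by
  rw [map_sub, coeffPairing_mul_comm hχ, sub_self]

theorem coeffPairing_mul_self [CharP R 2] (hsq : ∀ u, χ (u * u) = 0) (c : MonoidAlgebra R M) :
    coeffPairing χ (c * c) = 0 := by
  induction c using MonoidAlgebra.induction_linear with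
  | zero => simp
  | add a b ha hb =>
    have cross : coeffPairing χ (a * b) + coeffPairing χ (b * a) = 0 := by
      rw [coeffPairing_mul_comm hχ b a, CharTwo.add_self_eq_zero]
    calc coeffPairing χ ((a + b) * (a + b))
        = coeffPairing χ (a * a) + coeffPairing χ (b * b)
          + (coeffPairing χ (a * b) + coeffPairing χ (b * a)) := by
          simp only [add_mul, mul_add, map_add]; abel
      _ = 0 := by rw [ha, hb, cross, add_zero, add_zero]
  | single u r => rw [MonoidAlgebra.single_mul_single, coeffPairing_single, hsq, mul_zero]

end CyclicFunctional

section RotationIndicator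

variable {α R : Type*} [DecidableEq α] [Zero R] [One R]

def rotationIndicator (L : List α) (w : FreeMonoid α) : R :=
  if w.toList ~r L then 1 else 0

theorem rotationIndicator_mul_comm (L : List α) (u v : FreeMonoid α) :
    (rotationIndicator L (u * v) : R) = rotationIndicator L (v * u) := by
  simp only [rotationIndicator, FreeMonoid.toList_mul]
  exact if_congr ⟨List.isRotated_append.trans, List.isRotated_append.trans⟩ rfl rfl

theorem rotationIndicator_of_length_ne {L : List α} {w : FreeMonoid α}
    (hw : w.length ≠ L.length) : (rotationIndicator L w : R) = 0 :=
  if_neg fun h => hw h.perm.length_eq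

end RotationIndicator

abbrev wordXXYY : List (Fin 2) := [0, 0, 1, 1]

theorem not_isRotated_append_self_wordXXYY (l : List (Fin 2)) : ¬ (l ++ l ~r wordXXYY) := by
  intro h
  have hlen : l.length = 2 := by
    have := h.perm.length_eq
    simp only [List.length_append, wordXXYY, List.length_cons, List.length_nil] at this
    omega
  match l, hlen with
  | [a, b], _ => fin_cases a <;> fin_cases b <;> exact absurd h (by decide)

theorem rotationIndicator_wordXXYY_mul_self {R : Type*} [Zero R] [One R] (u : FW) :
    (rotationIndicator wordXXYY (u * u) : R) = 0 := by
  rw [rotationIndicator, FreeMonoid.toList_mul, if_neg (not_isRotated_append_self_wordXXYY _)]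

/-- for every `c ∈ (ℤ/2)⟨X,Y⟩`, `X²Y² − c²` does not lie in `[Ā,Ā] + F⁵Ā`. -/
theorem stmt5 (c : Abar) :
    Xv ^ 2 * Yv ^ 2 - c ^ 2 ∉ AddSubgroup.closure (commA ∪ FdegSet 5) := by
  set φ := coeffPairing (R := ZMod 2) (rotationIndicator wordXXYY)
  have hcomm := rotationIndicator_mul_comm (R := ZMod 2) wordXXYY
  have closure_le_ker : AddSubgroup.closure (commA ∪ FdegSet 5) ≤ φ.ker := by
    rw [AddSubgroup.closure_le]
    rintro x (⟨a, b, rfl⟩ | ⟨w, hw, rfl⟩)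
    · exact coeffPairing_commutator hcomm a b
    · show φ _ = 0
      have hw' : w.length ≠ wordXXYY.length := by change _ ≠ 4; omega
      rw [MonoidAlgebra.of_apply, coeffPairing_single, rotationIndicator_of_length_ne hw', mul_zero]
  have square : φ (c ^ 2) = 0 :=
    (sq c).symm ▸ coeffPairing_mul_self hcomm rotationIndicator_wordXXYY_mul_self c
  have target : φ (Xv ^ 2 * Yv ^ 2) = 1 := by
    rw [Xv, Yv, ← map_pow, ← map_pow, ← map_mul, MonoidAlgebra.of_apply, coeffPairing_single,
      one_mul]
    decide
  intro hmem
  have := closure_le_ker hmem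
  rw [AddMonoidHom.mem_ker, map_sub, square, target] at this
  exact one_ne_zero this
end

section
/- Let Ā = (ℤ/2)⟨X,Y⟩. Then the element X²Y² − XYXY does not lie in [Ā,Ā]. -/
/-!
An additive map `φ` with `φ (a * b) = φ (b * a)` kills every commutator, hence all of `[Ā,Ā]`.
On a monoid algebra, summing the coefficients over a set of words closed under `uv ↦ vu` is
such a map. Take the rotation class `{XYXY, YXYX}`: it contains `XYXY` but not `X²Y²`, so this
map sends `X²Y² − XYXY` to `-1 ≠ 0`.
-/

theorem AddMonoidHom.closure_commutators_le_ker {R B : Type*} [Ring R] [AddCommGroup B]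
    (φ : R →+ B) (hφ : ∀ a b, φ (a * b) = φ (b * a)) :
    AddSubgroup.closure {x : R | ∃ a b, x = a * b - b * a} ≤ φ.ker := by
  rw [AddSubgroup.closure_le]
  rintro _ ⟨a, b, rfl⟩
  rw [SetLike.mem_coe, AddMonoidHom.mem_ker, map_sub, hφ, sub_self]

namespace MonoidAlgebra

variable {k M : Type*}

noncomputable def coeffSumOn [Semiring k] (S : Set M) : MonoidAlgebra k M →+ k :=
  (Finsupp.liftAddHom fun m => S.indicator (fun _ => AddMonoidHom.id k) m).comp
    coeffAddEquiv.toAddMonoidHom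

theorem coeffSumOn_single [Semiring k] (S : Set M) (m : M) (r : k) :
    coeffSumOn S (single m r) = S.indicator (fun _ => r) m := by
  by_cases hm : m ∈ S <;> simp [coeffSumOn, hm]

theorem coeffSumOn_mul_comm [CommSemiring k] [Monoid M] {S : Set M}
    (hS : ∀ u v, u * v ∈ S ↔ v * u ∈ S) (a b : MonoidAlgebra k M) :
    coeffSumOn S (a * b) = coeffSumOn S (b * a) := by
  induction a using MonoidAlgebra.induction_linear with
  | zero => simp
  | add f g hf hg => rw [add_mul, mul_add, map_add, map_add, hf, hg]
  | single u r =>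
    induction b using MonoidAlgebra.induction_linear with
    | zero => simp
    | add f g hf hg => rw [add_mul, mul_add, map_add, map_add, hf, hg]
    | single v s =>
      rw [single_mul_single, single_mul_single, coeffSumOn_single, coeffSumOn_single,
        mul_comm s r]
      by_cases huv : u * v ∈ S
      · rw [Set.indicator_of_mem huv, Set.indicator_of_mem ((hS u v).mp huv)]
      · rw [Set.indicator_of_notMem huv, Set.indicator_of_notMem (mt (hS u v).mpr huv)]

end MonoidAlgebra

namespace FreeMonoid

variable {α : Type*}

def rotationClass (w : FreeMonoid α) : Set (FreeMonoid α) := {u | u.toList ~r w.toList}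

theorem mem_rotationClass_self (w : FreeMonoid α) : w ∈ w.rotationClass :=
  List.IsRotated.refl _

theorem toList_mul_isRotated (u v : FreeMonoid α) : (u * v).toList ~r (v * u).toList := by
  simpa only [toList_mul] using List.isRotated_append

theorem mul_mem_rotationClass_comm (w u v : FreeMonoid α) :
    u * v ∈ w.rotationClass ↔ v * u ∈ w.rotationClass :=
  ⟨(toList_mul_isRotated v u).trans, (toList_mul_isRotated u v).trans⟩

end FreeMonoid

/-- `X²Y² − XYXY ∉ [Ā,Ā]`. -/
theorem stmt7 :
    Xv ^ 2 * Yv ^ 2 - Xv * Yv * Xv * Yv ∉ AddSubgroup.closure commA := by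
  set w : FW := .of 0 * .of 1 * .of 0 * .of 1
  let φ : Abar →+ ZMod 2 := MonoidAlgebra.coeffSumOn w.rotationClass
  have hX2Y2 : Xv ^ 2 * Yv ^ 2 = MonoidAlgebra.single (.of 0 ^ 2 * .of 1 ^ 2) 1 := by
    simp [Xv, Yv]
  have hXYXY : Xv * Yv * Xv * Yv = MonoidAlgebra.single w 1 := by
    simp [Xv, Yv, w]
  have hX2Y2_notMem : .of 0 ^ 2 * .of 1 ^ 2 ∉ w.rotationClass := by
    simp only [FreeMonoid.rotationClass, w]
    decide
  have hφ : φ (Xv ^ 2 * Yv ^ 2 - Xv * Yv * Xv * Yv) = 1 := by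
    rw [map_sub, hX2Y2, hXYXY, MonoidAlgebra.coeffSumOn_single,
      MonoidAlgebra.coeffSumOn_single, Set.indicator_of_notMem hX2Y2_notMem,
      Set.indicator_of_mem w.mem_rotationClass_self]
    decide
  intro h
  have hker := φ.closure_commutators_le_ker
    (MonoidAlgebra.coeffSumOn_mul_comm (FreeMonoid.mul_mem_rotationClass_comm w)) h
  exact one_ne_zero (hφ.symm.trans hker)
end
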